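/- arXiv:1906.10802 — 3 statements merged into one kernel-verified Lean document; each statement's English description precedes it below -/
import Mathlib

section
/- If f : (0,∞) → ℝ is continuous, f(τ) ≥ 0 and τ ↦ f(τ)/τ³ is non-decreasing on (0,∞), then f(τ)·τ - 4·F(τ) ≥ 0 for all τ > 0, where F(τ) = ∫₀^τ f(s) ds. -/
open intervalIntegral

/-- If `f` is continuous, vanishes on `(-∞,0]`, is nonnegative, and `τ ↦ f τ / τ³` is
non-decreasing on `(0,∞)`, then `f τ * τ - 4 * F τ ≥ 0` for all `τ > 0`, where
`F τ = ∫ s in 0..τ, f s`. -/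
theorem stmt_1 (f : ℝ → ℝ) (hcont : Continuous f)
    (hzero : ∀ τ ≤ (0 : ℝ), f τ = 0)
    (hnonneg : ∀ τ : ℝ, 0 ≤ f τ)
    (hmono : MonotoneOn (fun τ => f τ / τ ^ 3) (Set.Ioi (0 : ℝ))) :
    ∀ τ > (0 : ℝ), 0 ≤ f τ * τ - 4 * ∫ s in (0 : ℝ)..τ, f s := by
  intro τ hτ
  have hτ3 : (0:ℝ) < τ ^ 3 := by positivity
  have key : ∀ s ∈ Set.Icc (0:ℝ) τ, f s ≤ f τ / τ ^ 3 * s ^ 3 := by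
    intro s hs
    rcases eq_or_lt_of_le hs.1 with h | h
    · rw [← h, hzero 0 le_rfl]
      simp
    · have := hmono (Set.mem_Ioi.mpr h) (Set.mem_Ioi.mpr hτ) hs.2
      have hs3 : (0:ℝ) < s ^ 3 := by positivity
      calc f s = f s / s ^ 3 * s ^ 3 := by field_simp
        _ ≤ f τ / τ ^ 3 * s ^ 3 := by
            exact mul_le_mul_of_nonneg_right this hs3.le
  have hint : (∫ s in (0:ℝ)..τ, f s) ≤ ∫ s in (0:ℝ)..τ, f τ / τ ^ 3 * s ^ 3 := by
    apply intervalIntegral.integral_mono_on hτ.le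
    · exact hcont.intervalIntegrable _ _
    · exact ((continuous_const.mul (continuous_pow 3))).intervalIntegrable _ _
    · exact key
  have hval : (∫ s in (0:ℝ)..τ, f τ / τ ^ 3 * s ^ 3) = f τ * τ / 4 := by
    rw [intervalIntegral.integral_const_mul, integral_pow]
    field_simp
    ring
  nlinarith [hint]
end

section
/- Let h : ℝ³ → ℝ be smooth with h = 0 on the ball B(0,1), h = 1 outside B(0,2), 0 ≤ h ≤ 1 and |∇h| ≤ C. For R > 0 set h_R(x) = h(x/R). Then there exists C' > 0 (independent of R and x) such that for all x ∈ ℝ³, |∫_{ℝ³} (h_R(x) - h_R(y))/|x-y|^(3+s) dy| ≤ C'/R^s. -/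
open MeasureTheory Measure Set Metric Real

lemma aux_polar_integrable {f : ℝ → ℝ}
    (hf : IntegrableOn (fun r => r ^ 2 * f r) (Ioi (0:ℝ))) :
    Integrable (fun x : EuclideanSpace ℝ (Fin 3) => f ‖x‖) := by
  have hdim : Module.finrank ℝ (EuclideanSpace ℝ (Fin 3)) = 3 := finrank_euclideanSpace_fin
  have h1 : Integrable (fun r : Ioi (0:ℝ) => f r.1) (Measure.volumeIoiPow 2) := by
    rw [Measure.volumeIoiPow, integrable_withDensity_iff (by measurability)
      (ae_of_all _ fun r => ENNReal.ofReal_lt_top)]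
    have h2 := (MeasurableEmbedding.subtype_coe
      (measurableSet_Ioi (a := (0:ℝ)))).integrable_map_iff (μ := volume.comap Subtype.val)
      (g := fun r : ℝ => r ^ 2 * f r)
    rw [map_comap_subtype_coe measurableSet_Ioi] at h2
    have h3 := h2.mp hf
    refine h3.congr ?_
    filter_upwards with r
    simp only [Function.comp_apply, ENNReal.toReal_ofReal (sq_nonneg r.1)]
    ring
  have h3 : Integrable (fun z : sphere (0 : EuclideanSpace ℝ (Fin 3)) 1 × Ioi (0:ℝ) => f z.2.1)
      ((volume : Measure (EuclideanSpace ℝ (Fin 3))).toSphere.prod (Measure.volumeIoiPow 2)) := by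
    simpa using (integrable_const (1:ℝ)).smul_prod h1
  have hmp :=
    (volume : Measure (EuclideanSpace ℝ (Fin 3))).measurePreserving_homeomorphUnitSphereProd
  rw [hdim] at hmp
  have h4 : Integrable (fun x : ({(0 : EuclideanSpace ℝ (Fin 3))}ᶜ : Set _) => f ‖x.1‖)
      (volume.comap Subtype.val) :=
    by simpa [Function.comp_def, homeomorphUnitSphereProd_apply_snd_coe] using
      (hmp.integrable_comp_emb (Homeomorph.measurableEmbedding _)).mpr h3
  have h5 := (MeasurableEmbedding.subtype_coe
      (measurableSet_singleton (0 : EuclideanSpace ℝ (Fin 3))).compl).integrable_map_iff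
      (μ := volume.comap Subtype.val)
      (g := fun x : EuclideanSpace ℝ (Fin 3) => f ‖x‖)
  rw [map_comap_subtype_coe (measurableSet_singleton _).compl,
    restrict_compl_singleton] at h5
  exact h5.mpr h4

lemma aux_oneD {s : ℝ} (hs0 : 0 < s) (hs1 : s < 1) {c R : ℝ} (hc : 0 ≤ c) (hR : 0 < R) :
    IntegrableOn (fun r => r ^ 2 * (min (c * r) 1 * r ^ (-(3+s)))) (Ioi (0:ℝ)) ∧
    ∫ r in Ioi (0:ℝ), r ^ 2 * (min (c * r) 1 * r ^ (-(3+s))) ≤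
      c * R ^ (1-s) / (1-s) + R ^ (-s) / s := by
  set F : ℝ → ℝ := fun r => r ^ 2 * (min (c * r) 1 * r ^ (-(3+s))) with hF
  have hmeasF : Measurable F := by
    apply ((measurable_id.pow_const 2).mul
      (((measurable_const.mul measurable_id).min measurable_const).mul
      (measurable_id.pow_const _)))
  have hFnonneg : ∀ r : ℝ, 0 < r → 0 ≤ F r := by
    intro r hr
    have : (0:ℝ) ≤ min (c * r) 1 := le_min (mul_nonneg hc hr.le) zero_le_one
    exact mul_nonneg (sq_nonneg r) (mul_nonneg this (rpow_nonneg hr.le _))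
  have hb1 : ∀ r ∈ Ioc (0:ℝ) R, F r ≤ c * r ^ (-s) := by
    intro r hr
    have hr0 : (0:ℝ) < r := hr.1
    have hnn : (0:ℝ) ≤ r ^ (-(3+s)) := rpow_nonneg hr0.le _
    have h1 : min (c * r) 1 * r ^ (-(3+s)) ≤ (c * r) * r ^ (-(3+s)) :=
      mul_le_mul_of_nonneg_right (min_le_left _ _) hnn
    calc F r ≤ r ^ 2 * ((c * r) * r ^ (-(3+s))) :=
          mul_le_mul_of_nonneg_left h1 (sq_nonneg r)
      _ = c * (r ^ ((3:ℕ):ℝ) * r ^ (-(3+s))) := by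
          rw [rpow_natCast]; ring
      _ = c * r ^ (((3:ℕ):ℝ) + -(3+s)) := by rw [← rpow_add hr0]
      _ = c * r ^ (-s) := by congr 1; push_cast; ring
  have hb2 : ∀ r ∈ Ioi R, F r ≤ r ^ (-(1+s)) := by
    intro r hr
    have hr0 : (0:ℝ) < r := hR.trans hr
    have hnn : (0:ℝ) ≤ r ^ (-(3+s)) := rpow_nonneg hr0.le _
    have h1 : min (c * r) 1 * r ^ (-(3+s)) ≤ 1 * r ^ (-(3+s)) :=
      mul_le_mul_of_nonneg_right (min_le_right _ _) hnn
    calc F r ≤ r ^ 2 * (1 * r ^ (-(3+s))) := mul_le_mul_of_nonneg_left h1 (sq_nonneg r)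
      _ = r ^ ((2:ℕ):ℝ) * r ^ (-(3+s)) := by rw [rpow_natCast]; ring
      _ = r ^ (((2:ℕ):ℝ) + -(3+s)) := by rw [← rpow_add hr0]
      _ = r ^ (-(1+s)) := by congr 1; push_cast; ring
  have hm1 : IntegrableOn (fun r : ℝ => c * r ^ (-s)) (Ioc 0 R) :=
    ((intervalIntegral.intervalIntegrable_rpow' (a := 0) (b := R) (by linarith)).1).const_mul c
  have hm2 : IntegrableOn (fun r : ℝ => r ^ (-(1+s))) (Ioi R) :=
    integrableOn_Ioi_rpow_of_lt (by linarith) hR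
  have hi1 : IntegrableOn F (Ioc 0 R) := by
    refine Integrable.mono' hm1 hmeasF.aestronglyMeasurable.restrict ?_
    filter_upwards [ae_restrict_mem measurableSet_Ioc] with r hr
    rw [Real.norm_eq_abs, abs_of_nonneg (hFnonneg r hr.1)]
    exact hb1 r hr
  have hi2 : IntegrableOn F (Ioi R) := by
    refine Integrable.mono' hm2 hmeasF.aestronglyMeasurable.restrict ?_
    filter_upwards [ae_restrict_mem measurableSet_Ioi] with r hr
    rw [Real.norm_eq_abs, abs_of_nonneg (hFnonneg r (hR.trans hr))]
    exact hb2 r hr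
  have hunion : Ioc (0:ℝ) R ∪ Ioi R = Ioi 0 := Ioc_union_Ioi_eq_Ioi hR.le
  constructor
  · rw [← hunion]; exact hi1.union hi2
  · have hsplit : ∫ r in Ioi (0:ℝ), F r = (∫ r in Ioc (0:ℝ) R, F r) + ∫ r in Ioi R, F r := by
      rw [← hunion, setIntegral_union (Ioc_disjoint_Ioi le_rfl) measurableSet_Ioi hi1 hi2]
    have e1 : ∫ r in Ioc (0:ℝ) R, c * r ^ (-s) = c * R ^ (1-s) / (1-s) := by
      rw [MeasureTheory.integral_const_mul, ← intervalIntegral.integral_of_le hR.le,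
        integral_rpow (Or.inl (by linarith)), Real.zero_rpow (by linarith : -s + 1 ≠ 0)]
      rw [show -s + 1 = 1 - s by ring]
      ring
    have e2 : ∫ r in Ioi R, r ^ (-(1+s)) = R ^ (-s) / s := by
      rw [integral_Ioi_rpow_of_lt (by linarith) hR, show -(1+s) + 1 = -s by ring]
      rw [neg_div, div_neg, neg_neg]
    calc ∫ r in Ioi (0:ℝ), F r = (∫ r in Ioc (0:ℝ) R, F r) + ∫ r in Ioi R, F r := hsplit
      _ ≤ (∫ r in Ioc (0:ℝ) R, c * r ^ (-s)) + ∫ r in Ioi R, r ^ (-(1+s)) :=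
          add_le_add (setIntegral_mono_on hi1 hm1 measurableSet_Ioc hb1)
            (setIntegral_mono_on hi2 hm2 measurableSet_Ioi hb2)
      _ = c * R ^ (1-s) / (1-s) + R ^ (-s) / s := by rw [e1, e2]

/-- Let `h : ℝ³ → ℝ` be smooth, equal to `0` on `B(0,1)`, equal to `1` outside `B(0,2)`,
with `0 ≤ h ≤ 1` and `‖∇h‖ ≤ C`.  Setting `h_R x = h (x/R)`, there is a constant
`C' > 0` independent of `R` and `x` such that
`|∫ (h_R x - h_R y)/‖x-y‖^(3+s) dy| ≤ C'/R^s` for all `x`. -/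
theorem stmt_7 (s : ℝ) (hs : s ∈ Set.Ioo (0 : ℝ) 1)
    (h : EuclideanSpace ℝ (Fin 3) → ℝ) (C : ℝ)
    (hsmooth : ContDiff ℝ (⊤ : ℕ∞) h)
    (h0 : ∀ x ∈ Metric.ball (0 : EuclideanSpace ℝ (Fin 3)) 1, h x = 0)
    (h1 : ∀ x ∉ Metric.ball (0 : EuclideanSpace ℝ (Fin 3)) 2, h x = 1)
    (hbd : ∀ x, 0 ≤ h x ∧ h x ≤ 1)
    (hgrad : ∀ x, ‖fderiv ℝ h x‖ ≤ C) :
    ∃ C' > (0 : ℝ), ∀ R > (0 : ℝ), ∀ x : EuclideanSpace ℝ (Fin 3),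
      |∫ y : EuclideanSpace ℝ (Fin 3),
          (h (R⁻¹ • x) - h (R⁻¹ • y)) / ‖x - y‖ ^ (3 + s)| ≤ C' / R ^ s := by
  obtain ⟨hs0, hs1⟩ := hs
  have hC : 0 ≤ C := le_trans (norm_nonneg _) (hgrad 0)
  have hvol : 0 < (volume (ball (0 : EuclideanSpace ℝ (Fin 3)) 1)).toReal :=
    ENNReal.toReal_pos (measure_ball_pos volume 0 one_pos).ne' measure_ball_lt_top.ne
  refine ⟨3 * (volume (ball (0 : EuclideanSpace ℝ (Fin 3)) 1)).toReal * (C/(1-s) + 1/s),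
    by
      have hpos : 0 < C/(1-s) + 1/s :=
        add_pos_of_nonneg_of_pos (div_nonneg hC (by linarith)) (by positivity)
      positivity, ?_⟩
  intro R hR x
  have hR0 : R ≠ 0 := hR.ne'
  set c : ℝ := C / R with hc
  have hc0 : 0 ≤ c := div_nonneg hC hR.le
  set φ : ℝ → ℝ := fun r => min (c * r) 1 * r ^ (-(3+s)) with hφ
  obtain ⟨hint1, hbnd1⟩ := aux_oneD hs0 hs1 hc0 hR
  have hφint : Integrable (fun z : EuclideanSpace ℝ (Fin 3) => φ ‖z‖) := aux_polar_integrable hint1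
  have hgint : Integrable (fun y : EuclideanSpace ℝ (Fin 3) => φ ‖x - y‖) volume :=
    hφint.comp_sub_left x
  have hptwise : ∀ y : EuclideanSpace ℝ (Fin 3),
      ‖(h (R⁻¹ • x) - h (R⁻¹ • y)) / ‖x - y‖ ^ (3 + s)‖ ≤ φ ‖x - y‖ := by
    intro y
    rcases eq_or_ne y x with rfl | hne
    · simp [hφ, Real.norm_eq_abs]
    · have hd : (0:ℝ) < ‖x - y‖ := by
        rw [norm_pos_iff]; exact sub_ne_zero.mpr (Ne.symm hne)
      have hD : (0:ℝ) < ‖x - y‖ ^ (3 + s) := rpow_pos_of_pos hd _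
      have hnum1 : |h (R⁻¹ • x) - h (R⁻¹ • y)| ≤ c * ‖x - y‖ := by
        have key := Convex.norm_image_sub_le_of_norm_fderiv_le (f := h)
          (fun z _ => (hsmooth.differentiable (by simp)).differentiableAt)
          (fun z _ => hgrad z) convex_univ (mem_univ (R⁻¹ • y)) (mem_univ (R⁻¹ • x))
        simp only [← smul_sub, norm_smul, norm_inv, Real.norm_eq_abs, abs_of_pos hR] at key
        calc |h (R⁻¹ • x) - h (R⁻¹ • y)| ≤ C * (R⁻¹ * ‖x - y‖) := key
          _ = c * ‖x - y‖ := by rw [hc]; ring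
      have hnum2 : |h (R⁻¹ • x) - h (R⁻¹ • y)| ≤ 1 := by
        rw [abs_sub_le_iff]
        constructor
        · linarith [(hbd (R⁻¹ • x)).2, (hbd (R⁻¹ • y)).1]
        · linarith [(hbd (R⁻¹ • y)).2, (hbd (R⁻¹ • x)).1]
      rw [Real.norm_eq_abs, abs_div, abs_of_pos hD]
      calc |h (R⁻¹ • x) - h (R⁻¹ • y)| / ‖x - y‖ ^ (3 + s)
          ≤ min (c * ‖x - y‖) 1 / ‖x - y‖ ^ (3 + s) :=
            (div_le_div_iff_of_pos_right hD).mpr (le_min hnum1 hnum2)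
        _ = φ ‖x - y‖ := by
            rw [hφ, div_eq_mul_inv, ← Real.rpow_neg hd.le]
  have key := norm_integral_le_of_norm_le hgint (ae_of_all _ hptwise)
  rw [Real.norm_eq_abs] at key
  have hpolar := MeasureTheory.integral_fun_norm_addHaar
    (volume : Measure (EuclideanSpace ℝ (Fin 3))) φ
  rw [finrank_euclideanSpace_fin] at hpolar
  have hIs : ∫ r in Ioi (0:ℝ), r ^ (3 - 1) • φ r = ∫ r in Ioi (0:ℝ), r ^ 2 * φ r := by
    apply setIntegral_congr_fun measurableSet_Ioi
    intro r _
    norm_num [smul_eq_mul]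
  have hchain : |∫ y : EuclideanSpace ℝ (Fin 3),
      (h (R⁻¹ • x) - h (R⁻¹ • y)) / ‖x - y‖ ^ (3 + s)| ≤
      3 * (volume (ball (0 : EuclideanSpace ℝ (Fin 3)) 1)).toReal *
        ∫ r in Ioi (0:ℝ), r ^ 2 * φ r := by
    calc |∫ y : EuclideanSpace ℝ (Fin 3),
        (h (R⁻¹ • x) - h (R⁻¹ • y)) / ‖x - y‖ ^ (3 + s)|
        ≤ ∫ y : EuclideanSpace ℝ (Fin 3), φ ‖x - y‖ := key
      _ = ∫ z : EuclideanSpace ℝ (Fin 3), φ ‖z‖ :=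
          integral_sub_left_eq_self (fun z => φ ‖z‖) volume x
      _ = 3 * (volume (ball (0 : EuclideanSpace ℝ (Fin 3)) 1)).toReal *
            ∫ r in Ioi (0:ℝ), r ^ 2 * φ r := by
          rw [hpolar, hIs, nsmul_eq_mul, smul_eq_mul, measureReal_def]
          ring
  have hfinal : 3 * (volume (ball (0 : EuclideanSpace ℝ (Fin 3)) 1)).toReal *
      ∫ r in Ioi (0:ℝ), r ^ 2 * φ r ≤
      3 * (volume (ball (0 : EuclideanSpace ℝ (Fin 3)) 1)).toReal * (C/(1-s) + 1/s) / R ^ s := by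
    have h1 : c * R ^ (1-s) / (1-s) + R ^ (-s) / s = (C/(1-s) + 1/s) * R ^ (-s) := by
      have e1 : R ^ (1-s) = R * R ^ (-s) := by
        rw [show (1:ℝ) - s = 1 + -s by ring, rpow_add hR, rpow_one]
      rw [hc, e1, show C / R * (R * R ^ (-s)) = C * R ^ (-s) by field_simp]
      ring
    have h2 : (3 * (volume (ball (0 : EuclideanSpace ℝ (Fin 3)) 1)).toReal) *
        (∫ r in Ioi (0:ℝ), r ^ 2 * φ r) ≤
        (3 * (volume (ball (0 : EuclideanSpace ℝ (Fin 3)) 1)).toReal) *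
          ((C/(1-s) + 1/s) * R ^ (-s)) := by
      apply mul_le_mul_of_nonneg_left _ (by positivity)
      rw [← h1]
      exact hbnd1
    calc 3 * (volume (ball (0 : EuclideanSpace ℝ (Fin 3)) 1)).toReal *
        ∫ r in Ioi (0:ℝ), r ^ 2 * φ r
        ≤ (3 * (volume (ball (0 : EuclideanSpace ℝ (Fin 3)) 1)).toReal) *
          ((C/(1-s) + 1/s) * R ^ (-s)) := h2
      _ = 3 * (volume (ball (0 : EuclideanSpace ℝ (Fin 3)) 1)).toReal * (C/(1-s) + 1/s) / R ^ s := by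
          rw [Real.rpow_neg hR.le, div_eq_mul_inv]
          ring
  calc |∫ y : EuclideanSpace ℝ (Fin 3),
      (h (R⁻¹ • x) - h (R⁻¹ • y)) / ‖x - y‖ ^ (3 + s)|
      ≤ 3 * (volume (ball (0 : EuclideanSpace ℝ (Fin 3)) 1)).toReal *
        ∫ r in Ioi (0:ℝ), r ^ 2 * φ r := hchain
    _ ≤ 3 * (volume (ball (0 : EuclideanSpace ℝ (Fin 3)) 1)).toReal * (C/(1-s) + 1/s) / R ^ s :=
        hfinal
end

section
/- Suppose ℐ₀ and ℐ₁ are functionals of the form ℐ_i(u) = (1/2)A(u) + (μ_i/2)‖u‖₂² + (1/4)B(u) - N(u) with μ₀ < μ₁ and with the property that ℐ₁ has a critical point w with ℐ₁(w) = sup_{τ>0} ℐ₁(τw) = c₁, and for every v ≠ 0 the map τ ↦ ℐ₀(τv) attains a positive maximum. Then the mountain-pass level c₀ = inf_v sup_τ ℐ₀(τv) satisfies c₀ < c₁. -/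
/-- Monotonicity of the mountain-pass level in `μ`.  Let
`ℐ_i(u) = (1/2)A(u) + (μ_i/2)N₂(u) + (1/4)B(u) - N(u)` with `μ₀ < μ₁`.  Suppose `ℐ₁`
has a critical point `w ≠ 0` with `ℐ₁(w) = sup_{τ>0} ℐ₁(τ w) = c₁` and `N₂(τ w) > 0`
for `τ > 0`, and for every `v ≠ 0` the map `τ ↦ ℐ₀(τ v)` attains a positive maximum on
`(0,∞)`.  Then `c₀ = inf_{v ≠ 0} sup_{τ>0} ℐ₀(τ v) < c₁`. -/
theorem stmt_15 {E : Type*} [NormedAddCommGroup E] [NormedSpace ℝ E]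
    (A B N N₂ : E → ℝ) (μ₀ μ₁ : ℝ) (hμ : μ₀ < μ₁)
    (I₀ I₁ : E → ℝ)
    (hI₀ : ∀ u, I₀ u = (1 / 2) * A u + (μ₀ / 2) * N₂ u + (1 / 4) * B u - N u)
    (hI₁ : ∀ u, I₁ u = (1 / 2) * A u + (μ₁ / 2) * N₂ u + (1 / 4) * B u - N u)
    (w : E) (hw : w ≠ 0) (c₁ : ℝ)
    (hc₁ : I₁ w = c₁) (hsup : ∀ τ > (0 : ℝ), I₁ (τ • w) ≤ c₁)
    (hN₂ : ∀ τ > (0 : ℝ), 0 < N₂ (τ • w))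
    (hmax : ∀ v : E, v ≠ 0 → ∃ τ₀ > (0 : ℝ),
      (∀ τ > (0 : ℝ), I₀ (τ • v) ≤ I₀ (τ₀ • v)) ∧ 0 < I₀ (τ₀ • v)) :
    sInf {c : ℝ | ∃ v : E, v ≠ 0 ∧ c = sSup ((fun τ : ℝ => I₀ (τ • v)) '' Set.Ioi 0)}
      < c₁ := by
  have hlt : ∀ τ > (0 : ℝ), I₀ (τ • w) < c₁ := by
    intro τ hτ
    have h1 : I₀ (τ • w) = I₁ (τ • w) - ((μ₁ - μ₀) / 2) * N₂ (τ • w) := by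
      rw [hI₀, hI₁]; ring
    have h2 : 0 < ((μ₁ - μ₀) / 2) * N₂ (τ • w) :=
      mul_pos (by linarith) (hN₂ τ hτ)
    have := hsup τ hτ
    linarith
  obtain ⟨τ₀, hτ₀, hub, hpos⟩ := hmax w hw
  set S := {c : ℝ | ∃ v : E, v ≠ 0 ∧ c = sSup ((fun τ : ℝ => I₀ (τ • v)) '' Set.Ioi 0)}
  have hmem : sSup ((fun τ : ℝ => I₀ (τ • w)) '' Set.Ioi 0) ∈ S := ⟨w, hw, rfl⟩
  have hbdd : BddBelow S := by
    refine ⟨0, fun c hc => ?_⟩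
    obtain ⟨v, hv, rfl⟩ := hc
    obtain ⟨σ, hσ, hubv, hposv⟩ := hmax v hv
    have hba : BddAbove ((fun τ : ℝ => I₀ (τ • v)) '' Set.Ioi 0) := by
      refine ⟨I₀ (σ • v), fun x hx => ?_⟩
      obtain ⟨τ, hτ, rfl⟩ := hx
      exact hubv τ hτ
    have : I₀ (σ • v) ≤ sSup ((fun τ : ℝ => I₀ (τ • v)) '' Set.Ioi 0) :=
      le_csSup hba ⟨σ, hσ, rfl⟩
    linarith
  have h3 : sSup ((fun τ : ℝ => I₀ (τ • w)) '' Set.Ioi 0) ≤ I₀ (τ₀ • w) := by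
    refine csSup_le ⟨I₀ (τ₀ • w), τ₀, hτ₀, rfl⟩ ?_
    rintro x ⟨τ, hτ, rfl⟩
    exact hub τ hτ
  calc sInf S ≤ sSup ((fun τ : ℝ => I₀ (τ • w)) '' Set.Ioi 0) := csInf_le hbdd hmem
    _ ≤ I₀ (τ₀ • w) := h3
    _ < c₁ := hlt τ₀ hτ₀
end
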